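/- (Weighted distance bound, Lemma 35 of [Bresh]) Let μ(ρ) = ρ^{(s+3)/2} with γ ≥ s+2 and s ≥ -1, γ > 1, and h(ρ) = ρ^γ/(γ-1). For every compact set K ⊂ (0, ∞) there is a constant C > 0 such that for all ρ̄ ∈ K and all ρ ≥ 0, ρ |μ'(ρ) - μ'(ρ̄)|² ≤ C h(ρ|ρ̄), where h(ρ|ρ̄) = h(ρ) - h(ρ̄) - h'(ρ̄)(ρ - ρ̄). -/

import Mathlib

/-!
With `α = (s + 1) / 2` we have `μ' = ((s + 3) / 2) ρ ^ α`, and `(γ - 1) h(ρ|ρ̄)` is the Bregman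
divergence `D(ρ̄, ρ)` of `x ↦ x ^ γ`. Both `ρ (ρ ^ α - ρ̄ ^ α) ^ 2` and `D(ρ̄, ρ)` are homogeneous,
of degrees `2α + 1` and `γ`, so the substitution `ρ = ρ̄ t` reduces the claim, uniformly for `ρ̄` in
the compact `K ⊆ (0, ∞)`, to `t (t ^ α - 1) ^ 2 ≤ C D(1, t)` for `t ≥ 0`.
On `[1/2, 2]` both sides are comparable to `(t - 1) ^ 2`: `t ^ α` is Lipschitz there and `x ^ γ`
is strongly convex. For `t ≤ 1/2` the left side is at most `1/2` while `D(1, t) ≥ D(1, 1/2) > 0`.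
For `t ≥ 2` the left side is at most `t ^ (2α + 1) ≤ t ^ γ`, and the three-point inequality
`D(y, z) + D(z, x) ≤ D(y, x)` (for `z` between `y` and `x`) together with homogeneity gives
`D(1, t) ≥ D(t / 2, t) = (t / 2) ^ γ D(1, 2)`.
-/

open Set

noncomputable def bregman (f f' : ℝ → ℝ) (y x : ℝ) : ℝ := f x - f y - f' y * (x - y)

namespace ConvexOn

variable {s : Set ℝ} {f f' : ℝ → ℝ} {x y z : ℝ}

theorem bregman_nonneg (hf : ConvexOn ℝ s f) (hy : y ∈ s) (hx : x ∈ s)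
    (hf' : HasDerivAt f (f' y) y) : 0 ≤ bregman f f' y x := by
  unfold bregman
  rcases lt_trichotomy y x with hyx | rfl | hxy
  · have := hf.le_slope_of_hasDerivAt hy hx hyx hf'
    rw [slope_def_field, le_div_iff₀ (sub_pos.2 hyx)] at this
    linarith
  · simp
  · have := hf.slope_le_of_hasDerivAt hx hy hxy hf'
    rw [slope_def_field, div_le_iff₀ (sub_pos.2 hxy)] at this
    linarith

theorem bregman_add_bregman_le (hf : ConvexOn ℝ s f) (hf' : ∀ x ∈ s, HasDerivAt f (f' x) x)
    (hy : y ∈ s) (hz : z ∈ s) (hzyx : z ∈ uIcc y x) :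
    bregman f f' y z + bregman f f' z x ≤ bregman f f' y x := by
  have hmono : MonotoneOn f' s := by
    intro a ha b hb hab
    rw [← (hf' a ha).deriv, ← (hf' b hb).deriv]
    exact hf.monotoneOn_deriv (fun c hc => (hf' c hc).differentiableAt) ha hb hab
  have three_point : bregman f f' y x =
      bregman f f' y z + bregman f f' z x + (f' z - f' y) * (x - z) := by
    unfold bregman; ring
  have hcross : 0 ≤ (f' z - f' y) * (x - z) := by
    rcases mem_uIcc.1 hzyx with ⟨h1, h2⟩ | ⟨h1, h2⟩
    · exact mul_nonneg (sub_nonneg.2 (hmono hy hz h1)) (sub_nonneg.2 h2)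
    · exact mul_nonneg_of_nonpos_of_nonpos (sub_nonpos.2 (hmono hz hy h2)) (sub_nonpos.2 h1)
  linarith

end ConvexOn

theorem mul_sq_le_bregman {s : Set ℝ} (hs : Convex ℝ s) {f f' f'' : ℝ → ℝ} {m x y : ℝ}
    (hf : ∀ x ∈ s, HasDerivAt f (f' x) x) (hf' : ∀ x ∈ s, HasDerivAt f' (f'' x) x)
    (hm : ∀ x ∈ s, m ≤ f'' x) (hy : y ∈ s) (hx : x ∈ s) :
    m / 2 * (x - y) ^ 2 ≤ bregman f f' y x := by
  have hφ : ∀ x ∈ s, HasDerivAt (fun x => f x - m / 2 * x ^ 2) (f' x - m * x) x := fun x hx =>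
    ((hf x hx).sub ((hasDerivAt_pow 2 x).const_mul (m / 2))).congr_deriv (by ring)
  have hconv : ConvexOn ℝ s fun x => f x - m / 2 * x ^ 2 := by
    refine convexOn_of_hasDerivWithinAt2_nonneg hs (f'' := fun x => f'' x - m)
      (fun x hx => (hφ x hx).continuousAt.continuousWithinAt)
      (fun x hx => (hφ x (interior_subset hx)).hasDerivWithinAt) (fun x hx => ?_)
      (fun x hx => sub_nonneg.2 (hm x (interior_subset hx)))
    have := (hf' x (interior_subset hx)).sub ((hasDerivAt_id x).const_mul m)
    exact (this.congr_deriv (by simp)).hasDerivWithinAt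
  have := hconv.bregman_nonneg (f' := fun x => f' x - m * x) hy hx (hφ y hy)
  unfold bregman at *
  linarith

section rpow

variable {α γ t x y z : ℝ}

theorem min_rpow_le_rpow_of_mem_Icc {a b : ℝ} (p : ℝ) (ha : 0 < a) (hx : x ∈ Icc a b) :
    min (a ^ p) (b ^ p) ≤ x ^ p := by
  rcases le_total 0 p with hp | hp
  · exact (min_le_left _ _).trans (Real.rpow_le_rpow ha.le hx.1 hp)
  · exact (min_le_right _ _).trans (Real.rpow_le_rpow_of_nonpos (ha.trans_le hx.1) hx.2 hp)

theorem exists_sq_rpow_sub_rpow_le (p : ℝ) {a b : ℝ} (ha : 0 < a) :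
    ∃ L ≥ 0, ∀ x ∈ Icc a b, ∀ y ∈ Icc a b, (x ^ p - y ^ p) ^ 2 ≤ L * (x - y) ^ 2 := by
  have hdiff : ContDiffOn ℝ 1 (fun x : ℝ => x ^ p) (Icc a b) :=
    contDiffOn_id.rpow_const_of_ne fun x hx => (ha.trans_le hx.1).ne'
  obtain ⟨K, hK⟩ := hdiff.exists_lipschitzOnWith one_ne_zero (convex_Icc a b) isCompact_Icc
  refine ⟨(K : ℝ) ^ 2, by positivity, fun x hx y hy => ?_⟩
  have hlip := hK.dist_le_mul x hx y hy
  rw [Real.dist_eq, Real.dist_eq] at hlip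
  calc (x ^ p - y ^ p) ^ 2 = |x ^ p - y ^ p| ^ 2 := (sq_abs _).symm
    _ ≤ (K * |x - y|) ^ 2 := pow_le_pow_left₀ (abs_nonneg _) hlip 2
    _ = (K : ℝ) ^ 2 * (x - y) ^ 2 := by rw [mul_pow, sq_abs]

theorem mul_sq_rpow_sub_one_le_self (hα : 0 ≤ α) (ht : 0 ≤ t) (ht₁ : t ≤ 1) :
    t * (t ^ α - 1) ^ 2 ≤ t := by
  have := Real.rpow_le_one ht ht₁ hα
  have := Real.rpow_nonneg ht α
  have : (t ^ α - 1) ^ 2 ≤ 1 := by nlinarith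
  nlinarith

theorem mul_sq_rpow_sub_one_le_rpow (hα : 0 ≤ α) (hαγ : 2 * α + 1 ≤ γ) (ht : 1 ≤ t) :
    t * (t ^ α - 1) ^ 2 ≤ t ^ γ := by
  have ht₀ : 0 < t := one_pos.trans_le ht
  have h1 : 1 ≤ t ^ α := Real.one_le_rpow ht hα
  calc t * (t ^ α - 1) ^ 2 ≤ t * (t ^ α) ^ 2 := by gcongr; linarith
    _ = t ^ (2 * α + 1) := by
      rw [Real.rpow_add ht₀, Real.rpow_one, mul_comm 2 α, Real.rpow_mul ht₀.le]; norm_cast; ring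
    _ ≤ t ^ γ := Real.rpow_le_rpow_of_exponent_le ht hαγ

theorem mul_sq_rpow_sub_rpow_eq (α : ℝ) (hy : 0 < y) (hx : 0 ≤ x) :
    x * (x ^ α - y ^ α) ^ 2 = y ^ (2 * α + 1) * (x / y * ((x / y) ^ α - 1) ^ 2) := by
  rw [Real.div_rpow hx hy.le, Real.rpow_add hy, Real.rpow_one, mul_comm 2 α, Real.rpow_mul hy.le]
  norm_cast
  field_simp

noncomputable def rpowBregman (γ y x : ℝ) : ℝ :=
  bregman (fun x => x ^ γ) (fun x => γ * x ^ (γ - 1)) y x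

theorem rpowBregman_nonneg (hγ : 1 ≤ γ) (hy : 0 ≤ y) (hx : 0 ≤ x) : 0 ≤ rpowBregman γ y x :=
  (convexOn_rpow hγ).bregman_nonneg hy hx (Real.hasDerivAt_rpow_const (Or.inr hγ))

theorem rpowBregman_add_rpowBregman_le (hγ : 1 ≤ γ) (hy : 0 ≤ y) (hz : 0 ≤ z)
    (hzyx : z ∈ uIcc y x) : rpowBregman γ y z + rpowBregman γ z x ≤ rpowBregman γ y x :=
  (convexOn_rpow hγ).bregman_add_bregman_le
    (fun _ _ => Real.hasDerivAt_rpow_const (Or.inr hγ)) hy hz hzyx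

theorem rpowBregman_mul {c : ℝ} (hc : 0 < c) (hy : 0 ≤ y) (hx : 0 ≤ x) :
    rpowBregman γ (c * y) (c * x) = c ^ γ * rpowBregman γ y x := by
  simp only [rpowBregman, bregman]
  rw [Real.mul_rpow hc.le hx, Real.mul_rpow hc.le hy, Real.mul_rpow hc.le hy,
    Real.rpow_sub_one hc.ne']
  field_simp

theorem exists_mul_sq_le_rpowBregman (hγ : 1 < γ) {a b : ℝ} (ha : 0 < a) (hab : a ≤ b) :
    ∃ m > 0, ∀ y ∈ Icc a b, ∀ x ∈ Icc a b, m * (x - y) ^ 2 ≤ rpowBregman γ y x := by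
  set m := γ * (γ - 1) * min (a ^ (γ - 2)) (b ^ (γ - 2))
  have hm : 0 < m := by
    have : 0 < min (a ^ (γ - 2)) (b ^ (γ - 2)) :=
      lt_min (Real.rpow_pos_of_pos ha _) (Real.rpow_pos_of_pos (ha.trans_le hab) _)
    have : 0 < γ - 1 := by linarith
    positivity
  refine ⟨m / 2, by positivity, fun y hy x hx => ?_⟩
  refine mul_sq_le_bregman (convex_Icc a b) (f'' := fun x => γ * (γ - 1) * x ^ (γ - 2))
    (fun x _ => Real.hasDerivAt_rpow_const (Or.inr hγ.le)) (fun x hx => ?_) (fun x hx => ?_) hy hx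
  · have := (Real.hasDerivAt_rpow_const (p := γ - 1) (Or.inl (ha.trans_le hx.1).ne')).const_mul γ
    exact this.congr_deriv (by ring_nf)
  · exact mul_le_mul_of_nonneg_left (min_rpow_le_rpow_of_mem_Icc _ ha hx) (by nlinarith)

theorem rpowBregman_le_rpowBregman_of_le_of_le (hγ : 1 ≤ γ) (hx : 0 ≤ x) (hxz : x ≤ z)
    (hzy : z ≤ y) : rpowBregman γ y z ≤ rpowBregman γ y x := by
  have := rpowBregman_add_rpowBregman_le hγ (hx.trans (hxz.trans hzy)) (hx.trans hxz)
    (mem_uIcc.2 (Or.inr ⟨hxz, hzy⟩))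
  linarith [rpowBregman_nonneg hγ (hx.trans hxz) hx]

theorem div_two_rpow_mul_rpowBregman_one_two_le (hγ : 1 ≤ γ) (hy : 0 < y) (hyt : 2 * y ≤ t) :
    (t / 2) ^ γ * rpowBregman γ 1 2 ≤ rpowBregman γ y t := by
  have hscale := rpowBregman_mul (γ := γ) (by linarith : 0 < t / 2) zero_le_one zero_le_two
  rw [mul_one, div_mul_cancel₀ t two_ne_zero] at hscale
  have := rpowBregman_add_rpowBregman_le hγ hy.le (by linarith : 0 ≤ t / 2) (x := t)
    (mem_uIcc.2 (Or.inl ⟨by linarith, by linarith⟩))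
  linarith [rpowBregman_nonneg hγ hy.le (by linarith : 0 ≤ t / 2)]

theorem exists_mul_sq_rpow_sub_one_le_rpowBregman (hγ : 1 < γ) (hα : 0 ≤ α)
    (hαγ : 2 * α + 1 ≤ γ) :
    ∃ C > 0, ∀ t, 0 ≤ t → t * (t ^ α - 1) ^ 2 ≤ C * rpowBregman γ 1 t := by
  obtain ⟨m, hm, hquad⟩ := exists_mul_sq_le_rpowBregman hγ (a := 1 / 2) (b := 2)
    (by norm_num) (by norm_num)
  obtain ⟨L, hL, hlip⟩ := exists_sq_rpow_sub_rpow_le α (a := 1 / 2) (b := 2) (by norm_num)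
  have h2γ : 1 ≤ (2 : ℝ) ^ γ := Real.one_le_rpow (by norm_num) (by linarith)
  refine ⟨4 * 2 ^ γ * (1 + L) / m, by positivity, fun t ht => ?_⟩
  suffices ∃ c ≤ 4 * 2 ^ γ * (1 + L), m * (t * (t ^ α - 1) ^ 2) ≤ c * rpowBregman γ 1 t by
    obtain ⟨c, hc, h⟩ := this
    calc t * (t ^ α - 1) ^ 2 ≤ c / m * rpowBregman γ 1 t := by
          rw [div_mul_eq_mul_div, le_div_iff₀ hm]; linarith
      _ ≤ _ := by gcongr; exact rpowBregman_nonneg hγ.le zero_le_one ht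
  rcases le_total t (1 / 2) with hsmall | hmid
  · have hlow : m * (1 / 2 - 1) ^ 2 ≤ rpowBregman γ 1 t :=
      (hquad 1 (by norm_num) (1 / 2) (by norm_num)).trans
        (rpowBregman_le_rpowBregman_of_le_of_le hγ.le ht hsmall (by norm_num))
    have hw := mul_sq_rpow_sub_one_le_self hα ht (by linarith)
    exact ⟨2, by nlinarith, by nlinarith⟩
  rcases le_total t 2 with hmid' | hlarge
  · have hw : t * (t ^ α - 1) ^ 2 ≤ 2 * (L * (t - 1) ^ 2) := by
      have := hlip t ⟨hmid, hmid'⟩ 1 (by norm_num)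
      rw [Real.one_rpow] at this
      have := sq_nonneg (t ^ α - 1)
      nlinarith
    have := hquad 1 (by norm_num) t ⟨hmid, hmid'⟩
    exact ⟨2 * L, by nlinarith, by nlinarith⟩
  · have hlow : (t / 2) ^ γ * (m * (2 - 1) ^ 2) ≤ rpowBregman γ 1 t :=
      (mul_le_mul_of_nonneg_left (hquad 1 (by norm_num) 2 (by norm_num)) (by positivity)).trans
        (div_two_rpow_mul_rpowBregman_one_two_le hγ.le one_pos (by linarith))
    rw [Real.div_rpow ht zero_le_two] at hlow
    refine ⟨2 ^ γ, by nlinarith, ?_⟩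
    calc m * (t * (t ^ α - 1) ^ 2) ≤ m * t ^ γ := by
          gcongr; exact mul_sq_rpow_sub_one_le_rpow hα hαγ (by linarith)
      _ = 2 ^ γ * (t ^ γ / 2 ^ γ * (m * (2 - 1) ^ 2)) := by field_simp; ring
      _ ≤ 2 ^ γ * rpowBregman γ 1 t := by gcongr

end rpow

theorem exists_mul_sq_rpow_sub_rpow_le_rpowBregman {γ α : ℝ} (hγ : 1 < γ) (hα : 0 ≤ α)
    (hαγ : 2 * α + 1 ≤ γ) {K : Set ℝ} (hK : IsCompact K) (hKpos : K ⊆ Ioi 0) :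
    ∃ C > 0, ∀ y ∈ K, ∀ x, 0 ≤ x → x * (x ^ α - y ^ α) ^ 2 ≤ C * rpowBregman γ y x := by
  obtain ⟨C, hC, hbound⟩ := exists_mul_sq_rpow_sub_one_le_rpowBregman hγ hα hαγ
  obtain ⟨M, hM⟩ := hK.exists_bound_of_continuousOn (f := fun y => y ^ (2 * α + 1 - γ))
    fun y hy => (Real.continuousAt_rpow_const _ _ (Or.inl (hKpos hy).ne')).continuousWithinAt
  refine ⟨max M 1 * C, by positivity, fun y hy x hx => ?_⟩
  have hy₀ : 0 < y := hKpos hy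
  have hscale := rpowBregman_mul (γ := γ) hy₀ zero_le_one (div_nonneg hx hy₀.le)
  rw [mul_one, mul_div_cancel₀ x hy₀.ne'] at hscale
  have hMy : y ^ (2 * α + 1 - γ) ≤ max M 1 :=
    (le_abs_self _).trans ((hM y hy).trans (le_max_left _ _))
  calc x * (x ^ α - y ^ α) ^ 2 = y ^ (2 * α + 1) * (x / y * ((x / y) ^ α - 1) ^ 2) :=
        mul_sq_rpow_sub_rpow_eq α hy₀ hx
    _ ≤ y ^ (2 * α + 1) * (C * rpowBregman γ 1 (x / y)) :=
        mul_le_mul_of_nonneg_left (hbound _ (div_nonneg hx hy₀.le)) (by positivity)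
    _ = y ^ (2 * α + 1 - γ) * C * rpowBregman γ y x := by
        rw [hscale, Real.rpow_sub hy₀]; field_simp
    _ ≤ max M 1 * C * rpowBregman γ y x :=
        mul_le_mul_of_nonneg_right (mul_le_mul_of_nonneg_right hMy hC.le)
          (rpowBregman_nonneg hγ.le hy₀.le hx)

/-- (Lemma 35 of [Bresh]) Let `μ ρ = ρ^((s+3)/2)` with `γ ≥ s+2`, `s ≥ -1`, `γ > 1`,
and `h ρ = ρ^γ/(γ-1)`. For every compact `K ⊂ (0,∞)` there is `C > 0` such that for
all `ρ̄ ∈ K` and `ρ ≥ 0`, `ρ |μ'(ρ) - μ'(ρ̄)|² ≤ C h(ρ|ρ̄)`. -/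
theorem weighted_distance_bound (γ s : ℝ) (hγ : 1 < γ) (hs : -1 ≤ s) (hγs : s + 2 ≤ γ)
    (K : Set ℝ) (hK : IsCompact K) (hKpos : K ⊆ Set.Ioi 0) :
    ∃ C > 0, ∀ ρ' ∈ K, ∀ ρ : ℝ, 0 ≤ ρ →
      ρ * (deriv (fun x : ℝ => x ^ ((s + 3) / 2)) ρ
            - deriv (fun x : ℝ => x ^ ((s + 3) / 2)) ρ') ^ 2
        ≤ C * (ρ ^ γ / (γ - 1) - ρ' ^ γ / (γ - 1)
            - deriv (fun x : ℝ => x ^ γ / (γ - 1)) ρ' * (ρ - ρ')) := by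
  obtain ⟨C, hC, hbound⟩ := exists_mul_sq_rpow_sub_rpow_le_rpowBregman (α := (s + 1) / 2) hγ
    (by linarith) (by linarith) hK hKpos
  have hp : 0 < (s + 3) / 2 := by linarith
  have hγ₁ : 0 < γ - 1 := by linarith
  refine ⟨((s + 3) / 2) ^ 2 * C * (γ - 1), by positivity, fun ρ' hρ' ρ hρ => ?_⟩
  simp only [deriv_div_const, Real.deriv_rpow_const]
  have hexp : (s + 3) / 2 - 1 = (s + 1) / 2 := by ring
  rw [hexp]
  calc _ = ((s + 3) / 2) ^ 2 * (ρ * (ρ ^ ((s + 1) / 2) - ρ' ^ ((s + 1) / 2)) ^ 2) := by ring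
    _ ≤ ((s + 3) / 2) ^ 2 * (C * rpowBregman γ ρ' ρ) :=
        mul_le_mul_of_nonneg_left (hbound ρ' hρ' ρ hρ) (by positivity)
    _ = _ := by simp only [rpowBregman, bregman]; field_simp
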